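/- arXiv:1402.3072 — 8 statements merged into one kernel-verified Lean document; each statement's English description precedes it below -/
import Mathlib

section
/- For all real numbers p, q with 0 < q ≤ p < 1, the minimum of the two Kullback–Leibler divergences satisfies min{KL(q,p), KL(p,q)} ≥ (p−q)²/(2(p+q)). -/
/-!
Each term of the divergence dominates a squared Hellinger term:
`a log (a / b) = 2 a log (√a / √b) ≥ 2 a (1 - √b / √a) = (√a - √b)² + (a - b)`,
and the linear parts cancel over the two outcomes, so `KL a b ≥ (√a - √b)²`.
Finally `(a - b)² = (√a - √b)² (√a + √b)² ≤ (√a - √b)² · 2 (a + b)`.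
-/

/-- Kullback–Leibler divergence between Bernoulli(a) and Bernoulli(b). -/
noncomputable def KL (a b : ℝ) : ℝ :=
  a * Real.log (a / b) + (1 - a) * Real.log ((1 - a) / (1 - b))

open Real

lemma sq_sqrt_sub_add_sub_le_mul_log_div {a b : ℝ} (ha : 0 ≤ a) (hb : 0 < b) :
    (√a - √b) ^ 2 + (a - b) ≤ a * log (a / b) := by
  rcases ha.eq_or_lt with rfl | ha
  · simp [sq_sqrt hb.le]
  have hsa : 0 < √a := sqrt_pos.2 ha
  have hsb : 0 < √b := sqrt_pos.2 hb
  have hlog : log (a / b) = 2 * log (√a / √b) := by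
    simpa [div_pow, sq_sqrt ha.le, sq_sqrt hb.le] using log_pow (√a / √b) 2
  have hineq : 1 - √b / √a ≤ log (√a / √b) := by
    simpa using one_sub_inv_le_log_of_pos (div_pos hsa hsb)
  calc (√a - √b) ^ 2 + (a - b) = 2 * a * (1 - √b / √a) := by
        field_simp
        linear_combination (√a - 2 * √b) * sq_sqrt ha.le + √a * sq_sqrt hb.le
    _ ≤ 2 * a * log (√a / √b) := by gcongr
    _ = a * log (a / b) := by rw [hlog]; ring

lemma sq_sqrt_sub_add_sq_sqrt_sub_le_KL {a b : ℝ} (ha₀ : 0 ≤ a) (ha₁ : a ≤ 1)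
    (hb₀ : 0 < b) (hb₁ : b < 1) :
    (√a - √b) ^ 2 + (√(1 - a) - √(1 - b)) ^ 2 ≤ KL a b := by
  have h₀ := sq_sqrt_sub_add_sub_le_mul_log_div ha₀ hb₀
  have h₁ := sq_sqrt_sub_add_sub_le_mul_log_div (sub_nonneg.2 ha₁) (sub_pos.2 hb₁)
  unfold KL
  linarith

lemma sq_sub_div_le_sq_sqrt_sub {a b : ℝ} (ha : 0 ≤ a) (hb : 0 ≤ b) :
    (a - b) ^ 2 / (2 * (a + b)) ≤ (√a - √b) ^ 2 := by
  rcases (add_nonneg ha hb).eq_or_lt with hab | hab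
  · rw [← hab, mul_zero, div_zero]
    positivity
  have hsa := sq_sqrt ha
  have hsb := sq_sqrt hb
  rw [div_le_iff₀ (by positivity)]
  calc (a - b) ^ 2 = (√a - √b) ^ 2 * (√a + √b) ^ 2 := by
        linear_combination (a - b + √a ^ 2 - √b ^ 2) * (hsb - hsa)
    _ ≤ (√a - √b) ^ 2 * (2 * (a + b)) := by
        gcongr
        nlinarith [sq_nonneg (√a - √b)]

lemma sq_sub_div_le_KL {a b : ℝ} (ha₀ : 0 ≤ a) (ha₁ : a ≤ 1) (hb₀ : 0 < b) (hb₁ : b < 1) :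
    (a - b) ^ 2 / (2 * (a + b)) ≤ KL a b :=
  (sq_sub_div_le_sq_sqrt_sub ha₀ hb₀.le).trans <|
    (le_add_of_nonneg_right (sq_nonneg _)).trans (sq_sqrt_sub_add_sq_sqrt_sub_le_KL ha₀ ha₁ hb₀ hb₁)

theorem min_KL_ge (p q : ℝ) (hq : 0 < q) (hqp : q ≤ p) (hp : p < 1) :
    min (KL q p) (KL p q) ≥ (p - q) ^ 2 / (2 * (p + q)) := by
  have hp₀ : 0 < p := hq.trans_le hqp
  have hq₁ : q < 1 := hqp.trans_lt hp
  refine le_min ?_ (sq_sub_div_le_KL hp₀.le hp.le hq hq₁)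
  calc (p - q) ^ 2 / (2 * (p + q)) = (q - p) ^ 2 / (2 * (q + p)) := by ring
    _ ≤ KL q p := sq_sub_div_le_KL hq.le hq₁.le hp₀ hp
end

section
/- For all real numbers p, q ∈ (0,1), KL(p,q) ≥ KL(q,p) holds if and only if p(1−p) ≥ q(1−q). -/
open Real

lemma StrictMonoOn.sign_sub_eq {α β : Type*} [AddCommGroup α] [LinearOrder α]
    [IsOrderedAddMonoid α] [AddCommGroup β] [LinearOrder β] [IsOrderedAddMonoid β]
    {f : α → β} {s : Set α} (hf : StrictMonoOn f s) {a b : α} (ha : a ∈ s) (hb : b ∈ s) :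
    SignType.sign (f a - f b) = SignType.sign (a - b) := by
  rcases lt_trichotomy a b with h | rfl | h
  · rw [sign_neg (sub_neg.2 h), sign_neg (sub_neg.2 (hf ha hb h))]
  · simp
  · rw [sign_pos (sub_pos.2 h), sign_pos (sub_pos.2 (hf hb ha h))]

lemma two_mul_log_lt_sub_inv {r : ℝ} (hr : 1 < r) : 2 * log r < r - r⁻¹ := by
  have h := self_lt_sinh_iff.2 (log_pos hr)
  rw [sinh_log (by linarith)] at h
  linarith

/-- Twice the ratio of the arithmetic mean to the logarithmic mean of `r` and `1`. -/
noncomputable def amLogMeanRatio (r : ℝ) : ℝ := (r + 1) * log r / (r - 1)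

lemma hasDerivAt_amLogMeanRatio {r : ℝ} (hr0 : 0 < r) (hr1 : r ≠ 1) :
    HasDerivAt amLogMeanRatio ((r - r⁻¹ - 2 * log r) / (r - 1) ^ 2) r := by
  have hnum : HasDerivAt (fun x ↦ (x + 1) * log x) (1 * log r + (r + 1) * r⁻¹) r :=
    ((hasDerivAt_id' r).add_const 1).mul (hasDerivAt_log hr0.ne')
  refine (hnum.div ((hasDerivAt_id' r).sub_const 1) (sub_ne_zero.2 hr1)).congr_deriv ?_
  field_simp
  ring

lemma amLogMeanRatio_strictMonoOn : StrictMonoOn amLogMeanRatio (Set.Ioi 1) := by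
  have hderiv : ∀ r ∈ Set.Ioi (1 : ℝ),
      HasDerivAt amLogMeanRatio ((r - r⁻¹ - 2 * log r) / (r - 1) ^ 2) r :=
    fun r hr ↦ hasDerivAt_amLogMeanRatio (one_pos.trans hr) hr.ne'
  refine strictMonoOn_of_hasDerivWithinAt_pos (convex_Ioi 1)
    (fun r hr ↦ (hderiv r hr).continuousAt.continuousWithinAt)
    (fun r hr ↦ (hderiv r (interior_subset hr)).hasDerivWithinAt) fun r hr ↦ ?_
  rw [interior_Ioi] at hr
  have hr' : 0 < r - 1 := sub_pos.2 hr
  exact div_pos (by linarith [two_mul_log_lt_sub_inv hr]) (by positivity)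

lemma KL_sub_KL_eq {p q : ℝ} (hp0 : 0 < p) (hp1 : p < 1) (hq0 : 0 < q) (hq1 : q < 1) :
    KL p q - KL q p =
      (p - q) * (amLogMeanRatio (p / q) - amLogMeanRatio ((1 - q) / (1 - p))) := by
  rcases eq_or_ne p q with rfl | hne
  · simp
  have hp1' : 1 - p ≠ 0 := by linarith
  have hq1' : 1 - q ≠ 0 := by linarith
  have hpq : p - q ≠ 0 := sub_ne_zero.2 hne
  simp only [KL, amLogMeanRatio, div_sub_one hq0.ne', div_sub_one hp1', sub_sub_sub_cancel_left,
    log_div hp0.ne' hq0.ne', log_div hq0.ne' hp0.ne', log_div hp1' hq1', log_div hq1' hp1']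
  field_simp
  ring

lemma sign_KL_sub_KL {p q : ℝ} (hp0 : 0 < p) (hp1 : p < 1) (hq0 : 0 < q) (hq1 : q < 1) :
    SignType.sign (KL p q - KL q p) = SignType.sign (p * (1 - p) - q * (1 - q)) := by
  wlog hqp : q < p generalizing p q
  · rcases (not_lt.1 hqp).eq_or_lt with rfl | hpq
    · simp
    rw [← neg_sub, Left.sign_neg, this hq0 hq1 hp0 hp1 hpq, ← Left.sign_neg, neg_sub]
  have ha : 1 < p / q := (one_lt_div hq0).2 hqp
  have hb : 1 < (1 - q) / (1 - p) := (one_lt_div (by linarith)).2 (by linarith)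
  have hp1' : 1 - p ≠ 0 := by linarith
  have hab : p / q - (1 - q) / (1 - p) = (p * (1 - p) - q * (1 - q)) / (q * (1 - p)) := by
    field_simp
  rw [KL_sub_KL_eq hp0 hp1 hq0 hq1, sign_mul, sign_pos (sub_pos.2 hqp), one_mul,
    amLogMeanRatio_strictMonoOn.sign_sub_eq ha hb, hab, div_eq_mul_inv, sign_mul,
    sign_pos (inv_pos.2 (mul_pos hq0 (by linarith))), mul_one]

theorem KL_ge_iff (p q : ℝ) (hp0 : 0 < p) (hp1 : p < 1) (hq0 : 0 < q) (hq1 : q < 1) :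
    KL p q ≥ KL q p ↔ p * (1 - p) ≥ q * (1 - q) := by
  rw [ge_iff_le, ge_iff_le, ← sub_nonneg, ← sign_nonneg_iff, sign_KL_sub_KL hp0 hp1 hq0 hq1,
    sign_nonneg_iff, sub_nonneg]
end

section
/- For every real number c with −1/2 < c < 1/2, one has −(1+c)·log(1+2c) − (1−c)·log(1−2c) ≥ 0. -/
/-! With `t = 2c` the left-hand side is `-(log (1 - t²) + (t / 2) (log (1 + t) - log (1 - t)))`.
Expanding both logarithms in power series, the coefficient of `t^(2k+2)` in the bracket is
`1/(2k+1) - 1/(k+1) ≤ 0`, so the bracket is a sum of nonpositive terms. -/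

open Real

theorem hasSum_one_add_half_mul_log_add_one_sub_half_mul_log {t : ℝ} (ht : |t| < 1) :
    HasSum (fun k : ℕ => (t ^ 2) ^ (k + 1) * (1 / (2 * k + 1) - 1 / (k + 1)))
      ((1 + t / 2) * log (1 + t) + (1 - t / 2) * log (1 - t)) := by
  have ht2 : |t ^ 2| < 1 := by
    rw [abs_pow]
    exact pow_lt_one₀ (abs_nonneg t) ht two_ne_zero
  have hodd := (hasSum_log_sub_log_of_abs_lt_one ht).mul_left (t / 2)
  have hsq := (hasSum_pow_div_log_of_abs_lt_one ht2).neg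
  obtain ⟨hlt, hgt⟩ := abs_lt.mp ht
  have hlog_sq : log (1 - t ^ 2) = log (1 + t) + log (1 - t) := by
    rw [← log_mul (by linarith) (by linarith)]
    ring_nf
  have hsum := hodd.add hsq
  rw [neg_neg, hlog_sq] at hsum
  convert hsum using 1
  · rfl
  · funext k
    ring
  · ring

theorem one_add_half_mul_log_add_one_sub_half_mul_log_nonpos {t : ℝ} (ht : |t| < 1) :
    (1 + t / 2) * log (1 + t) + (1 - t / 2) * log (1 - t) ≤ 0 := by
  refine (hasSum_one_add_half_mul_log_add_one_sub_half_mul_log ht).nonpos fun k => ?_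
  have hk : (0 : ℝ) ≤ k := k.cast_nonneg
  refine mul_nonpos_of_nonneg_of_nonpos (by positivity) (sub_nonpos.mpr ?_)
  exact one_div_le_one_div_of_le (by positivity) (by linarith)

theorem neg_log_combination_nonneg (c : ℝ) (h1 : -(1/2) < c) (h2 : c < 1/2) :
    -(1 + c) * Real.log (1 + 2*c) - (1 - c) * Real.log (1 - 2*c) ≥ 0 := by
  have h := one_add_half_mul_log_add_one_sub_half_mul_log_nonpos (t := 2 * c)
    (abs_lt.mpr ⟨by linarith, by linarith⟩)
  rw [mul_div_cancel_left₀ c two_ne_zero] at h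
  linarith
end

section
/- There exists a constant C > 1 such that for all real numbers p, q ∈ (0,1) with q < p, KL(p,q) ≥ KL(q,p), and p ≥ C·q, one has KL(p,q) ≥ (p/3)·log(p(1−q)/(q(1−p))). -/
open Real

theorem KL_add_KL_swap {a b : ℝ} (ha₀ : a ≠ 0) (ha₁ : a ≠ 1) (hb₀ : b ≠ 0) (hb₁ : b ≠ 1) :
    KL a b + KL b a = (a - b) * log (a * (1 - b) / (b * (1 - a))) := by
  have ha₁' : 1 - a ≠ 0 := sub_ne_zero.mpr (Ne.symm ha₁)
  have hb₁' : 1 - b ≠ 0 := sub_ne_zero.mpr (Ne.symm hb₁)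
  rw [← div_mul_div_comm, log_mul (div_ne_zero ha₀ hb₀) (div_ne_zero hb₁' ha₁')]
  simp only [KL, log_div, ha₀, hb₀, ha₁', hb₁', ne_eq, not_false_eq_true]
  ring

theorem log_odds_ratio_nonneg {a b : ℝ} (hb : 0 < b) (hba : b ≤ a) (ha : a < 1) :
    0 ≤ log (a * (1 - b) / (b * (1 - a))) := by
  have hden : 0 < b * (1 - a) := mul_pos hb (by linarith)
  exact log_nonneg <| (one_le_div hden).mpr (by nlinarith)

theorem exists_C_KL_lower_bound :
    ∃ C : ℝ, C > 1 ∧ ∀ p q : ℝ, 0 < p → p < 1 → 0 < q → q < 1 → q < p →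
      KL p q ≥ KL q p → p ≥ C * q →
      KL p q ≥ (p / 3) * Real.log (p * (1 - q) / (q * (1 - p))) := by
  refine ⟨3, by norm_num, fun p q hp hp1 hq hq1 hqp hKL hpq => ?_⟩
  have hsum := KL_add_KL_swap hp.ne' hp1.ne hq.ne' hq1.ne
  have hL := log_odds_ratio_nonneg hq hqp.le hp1
  have hgap : 2 / 3 * p ≤ p - q := by linarith
  linarith [mul_le_mul_of_nonneg_right hgap hL]
end

section
/- For all real numbers p, q ∈ (0,1) with q < p, p(1−p) ≥ q(1−q), and p ≥ 5/6, one has KL(p,q) ≥ (p − 1/2)·log(p(1−q)/(q(1−p))), and in particular KL(p,q) ≥ (p/3)·log(p(1−q)/(q(1−p))). -/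
open Real

theorem KL_sub_mul_log_odds_ratio {p q : ℝ} (hp : p ≠ 0) (hp' : 1 - p ≠ 0) (hq : q ≠ 0)
    (hq' : 1 - q ≠ 0) :
    KL p q - (p - 1/2) * log (p * (1 - q) / (q * (1 - p))) =
      log (p * (1 - p) / (q * (1 - q))) / 2 := by
  unfold KL
  simp only [log_div, log_mul, hp, hp', hq, hq', mul_ne_zero_iff, ne_eq, not_false_eq_true,
    and_self]
  ring

theorem KL_ge_mul_log_odds_ratio {p q : ℝ} (hp : p ≠ 0) (hp' : 1 - p ≠ 0) (hq0 : 0 < q)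
    (hq1 : q < 1) (hvar : q * (1 - q) ≤ p * (1 - p)) :
    (p - 1/2) * log (p * (1 - q) / (q * (1 - p))) ≤ KL p q := by
  have hvar_pos : 0 < q * (1 - q) := mul_pos hq0 (sub_pos.mpr hq1)
  have hlog : 0 ≤ log (p * (1 - p) / (q * (1 - q))) :=
    log_nonneg ((one_le_div hvar_pos).mpr hvar)
  have := KL_sub_mul_log_odds_ratio hp hp' hq0.ne' (sub_pos.mpr hq1).ne'
  linarith

theorem log_odds_ratio_nonneg_s4 {p q : ℝ} (hq0 : 0 < q) (hqp : q ≤ p) (hp1 : p < 1) :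
    0 ≤ log (p * (1 - q) / (q * (1 - p))) := by
  refine log_nonneg ((one_le_div (mul_pos hq0 (sub_pos.mpr hp1))).mpr ?_)
  nlinarith

theorem KL_lower_bound_of_large_p (p q : ℝ) (hp0 : 0 < p) (hp1 : p < 1)
    (hq0 : 0 < q) (hq1 : q < 1) (hqp : q < p)
    (hvar : p * (1 - p) ≥ q * (1 - q)) (hp56 : p ≥ 5/6) :
    KL p q ≥ (p - 1/2) * Real.log (p * (1 - q) / (q * (1 - p))) ∧
    KL p q ≥ (p / 3) * Real.log (p * (1 - q) / (q * (1 - p))) := by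
  have hmain := KL_ge_mul_log_odds_ratio hp0.ne' (sub_pos.mpr hp1).ne' hq0 hq1 hvar
  refine ⟨hmain, le_trans ?_ hmain⟩
  exact mul_le_mul_of_nonneg_right (by linarith) (log_odds_ratio_nonneg_s4 hq0 hqp.le hp1)
end

section
/- For all real numbers p, q with 0 < q ≤ p < 1, the minimum of the two Kullback–Leibler divergences satisfies min{KL(q,p), KL(p,q)} ≥ (p−q)²/(2(2−p−q)). -/
/-! For fixed `a`, the map `x ↦ KL a x` has derivative `(x - a) / (x * (1 - x))` and vanishes
at `x = a`. Hence `x ↦ KL a x - (x - a) ^ 2 / (2 * c)` increases away from `a` as long as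
`x * (1 - x) ≤ c`, which gives `KL a b ≥ (a - b) ^ 2 / (2 * c)` when this holds between `a` and `b`.
Between `q` and `p` one has `x * (1 - x) ≤ 1 - x ≤ 1 - q ≤ 2 - p - q`. -/

open Set Real

lemma KL_self (a : ℝ) : KL a a = 0 := by
  rcases eq_or_ne a 0 with rfl | ha
  · simp [KL]
  rcases eq_or_ne (1 - a) 0 with h | h
  · simp [KL, h]
  simp [KL, div_self ha, div_self h]

lemma KL_one_sub_one_sub (a b : ℝ) : KL (1 - a) (1 - b) = KL a b := by
  simp only [KL, sub_sub_cancel]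
  ring

lemma mul_log_div_eq {a y : ℝ} (hy : y ≠ 0) : a * log (a / y) = a * log a - a * log y := by
  rcases eq_or_ne a 0 with rfl | ha
  · simp
  rw [log_div ha hy]
  ring

lemma hasDerivAt_KL_right (a : ℝ) {x : ℝ} (hx0 : 0 < x) (hx1 : x < 1) :
    HasDerivAt (KL a) ((x - a) / (x * (1 - x))) x := by
  have hx1' : 1 - x ≠ 0 := by linarith
  have hlog : HasDerivAt (fun y => a * log a - a * log y
      + ((1 - a) * log (1 - a) - (1 - a) * log (1 - y))) ((x - a) / (x * (1 - x))) x := by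
    have h1 := ((hasDerivAt_log hx0.ne').const_mul a).const_sub (a * log a)
    have h2 := ((((hasDerivAt_id x).const_sub 1).log hx1').const_mul (1 - a)).const_sub
      ((1 - a) * log (1 - a))
    refine (h1.add h2).congr_deriv ?_
    simp only [id]
    field_simp
    ring
  refine hlog.congr_of_eventuallyEq ?_
  filter_upwards [Ioo_mem_nhds hx0 hx1] with y hy
  rw [KL, mul_log_div_eq hy.1.ne', mul_log_div_eq (by linarith [hy.2] : 1 - y ≠ 0)]

lemma sq_div_le_KL_of_le {a b c : ℝ} (ha : 0 < a) (hab : a ≤ b) (hb : b < 1)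
    (hc : ∀ x ∈ Icc a b, x * (1 - x) ≤ c) : (b - a) ^ 2 / (2 * c) ≤ KL a b := by
  have hpos : ∀ x ∈ Icc a b, 0 < x * (1 - x) := fun x hx =>
    mul_pos (ha.trans_le hx.1) (by linarith [hx.2])
  have hc0 : 0 < c := (hpos a ⟨le_rfl, hab⟩).trans_le (hc a ⟨le_rfl, hab⟩)
  have hderiv : ∀ x ∈ Icc a b, HasDerivAt (fun x => KL a x - (x - a) ^ 2 / (2 * c))
      ((x - a) / (x * (1 - x)) - (x - a) / c) x := fun x hx => by
    refine ((hasDerivAt_KL_right a (ha.trans_le hx.1) (hx.2.trans_lt hb)).sub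
      ((((hasDerivAt_id x).sub_const a).pow 2).div_const (2 * c))).congr_deriv ?_
    simp only [id]
    field_simp
    ring
  have hmono : MonotoneOn (fun x => KL a x - (x - a) ^ 2 / (2 * c)) (Icc a b) := by
    refine monotoneOn_of_hasDerivWithinAt_nonneg (convex_Icc a b)
      (fun x hx => (hderiv x hx).continuousAt.continuousWithinAt)
      (fun x hx => (hderiv x (interior_subset hx)).hasDerivWithinAt) fun x hx => ?_
    have hx := interior_subset hx
    exact sub_nonneg.2 (div_le_div_of_nonneg_left (by linarith [hx.1]) (hpos x hx) (hc x hx))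
  simpa [KL_self] using hmono ⟨le_rfl, hab⟩ ⟨hab, le_rfl⟩ hab

lemma sq_div_le_KL {a b c : ℝ} (ha0 : 0 < a) (ha1 : a < 1) (hb0 : 0 < b) (hb1 : b < 1)
    (hc : ∀ x ∈ uIcc a b, x * (1 - x) ≤ c) : (a - b) ^ 2 / (2 * c) ≤ KL a b := by
  rcases le_total a b with hab | hba
  · rw [uIcc_of_le hab] at hc
    rw [sub_sq_comm]
    exact sq_div_le_KL_of_le ha0 hab hb1 hc
  · -- the symmetry `a ↦ 1 - a`, `b ↦ 1 - b` of `KL` reverses the order of `a` and `b`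
    rw [uIcc_of_ge hba] at hc
    have hc' : ∀ x ∈ Icc (1 - a) (1 - b), x * (1 - x) ≤ c := fun x hx => by
      simpa [mul_comm] using hc (1 - x) ⟨by linarith [hx.2], by linarith [hx.1]⟩
    have := sq_div_le_KL_of_le (by linarith) (by linarith : 1 - a ≤ 1 - b) (by linarith) hc'
    rwa [KL_one_sub_one_sub, sub_sub_sub_cancel_left] at this

theorem min_KL_ge' (p q : ℝ) (hq : 0 < q) (hqp : q ≤ p) (hp : p < 1) :
    min (KL q p) (KL p q) ≥ (p - q) ^ 2 / (2 * (2 - p - q)) := by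
  have hp0 : 0 < p := hq.trans_le hqp
  have hq1 : q < 1 := hqp.trans_lt hp
  have hc : ∀ x ∈ uIcc p q, x * (1 - x) ≤ 2 - p - q := fun x hx => by
    rw [uIcc_of_ge hqp] at hx
    nlinarith [hx.1, hx.2]
  refine le_min ?_ (sq_div_le_KL hp0 hp hq hq1 hc)
  rw [sub_sq_comm]
  exact sq_div_le_KL hq hq1 hp0 hp (uIcc_comm p q ▸ hc)
end

section
/- Let n be a natural number, 0 < q < p < 1, let X₁, …, Xₙ be i.i.d. Bernoulli(p) and Y₁, …, Yₙ be i.i.d. Bernoulli(q), with all of X₁, …, Xₙ, Y₁, …, Yₙ mutually independent. Then for every real a > 0, P(Σᵢ Xᵢ − Σᵢ Yᵢ ≤ −a) ≤ exp(−a·log(p(1−q)/(q(1−p)))). -/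
/-!
Chernoff's bound for the lower tail of `∑ Xᵢ - ∑ Yᵢ` at the exponent `t = -s`, with
`s = log (p(1-q)/(q(1-p)))` (nonnegative because `q < p`), gives
`exp (-a s) ∏ᵢ E[exp (-s Xᵢ)] E[exp (s Yᵢ)]`.
At this particular `s` the two Bernoulli moment generating functions are `(1-p)/(1-q)` and
`(1-q)/(1-p)`, so every factor of the product is `1`, whatever `n` is.
-/

open MeasureTheory ProbabilityTheory Real

lemma Real.exp_mul_of_eq_zero_or_eq_one {w : ℝ} (hw : w = 0 ∨ w = 1) (s : ℝ) :
    exp (s * w) = 1 + (exp s - 1) * w := by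
  rcases hw with rfl | rfl <;> simp

lemma mgf_product_at_log_odds_ratio_eq_one {p q : ℝ} (hp0 : 0 < p) (hp1 : p < 1)
    (hq0 : 0 < q) (hq1 : q < 1) :
    (1 + p * (exp (-log (p * (1 - q) / (q * (1 - p)))) - 1))
      * (1 + q * (exp (log (p * (1 - q) / (q * (1 - p)))) - 1)) = 1 := by
  have hp1' : 1 - p ≠ 0 := by linarith
  have hq1' : 1 - q ≠ 0 := by linarith
  rw [exp_neg, exp_log (by positivity)]
  field_simp
  ring

namespace ProbabilityTheory

section ZeroOneValued

variable {Ω : Type*} [MeasurableSpace Ω] {μ : Measure Ω} {W : Ω → ℝ}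

lemma integrable_of_eq_zero_or_eq_one [IsFiniteMeasure μ] (hW : Measurable W)
    (h01 : ∀ ω, W ω = 0 ∨ W ω = 1) : Integrable W μ :=
  .of_mem_Icc 0 1 hW.aemeasurable <| .of_forall fun ω => by rcases h01 ω with h | h <;> simp [h]

lemma integral_of_eq_zero_or_eq_one (hW : Measurable W) (h01 : ∀ ω, W ω = 0 ∨ W ω = 1) :
    ∫ ω, W ω ∂μ = μ.real {ω | W ω = 1} := by
  have hW_eq : W = {ω | W ω = 1}.indicator 1 := by
    funext ω
    rcases h01 ω with h | h <;> simp [Set.indicator, h]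
  conv_lhs => rw [hW_eq]
  exact integral_indicator_one (hW (measurableSet_singleton 1))

lemma integrable_exp_mul_of_eq_zero_or_eq_one [IsFiniteMeasure μ] (hW : Measurable W)
    (h01 : ∀ ω, W ω = 0 ∨ W ω = 1) (s : ℝ) : Integrable (fun ω => exp (s * W ω)) μ := by
  simp_rw [Real.exp_mul_of_eq_zero_or_eq_one (h01 _)]
  exact (integrable_const 1).add ((integrable_of_eq_zero_or_eq_one hW h01).const_mul _)

lemma mgf_of_eq_zero_or_eq_one [IsProbabilityMeasure μ] (hW : Measurable W)
    (h01 : ∀ ω, W ω = 0 ∨ W ω = 1) (s : ℝ) :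
    mgf W μ s = 1 + μ.real {ω | W ω = 1} * (exp s - 1) := by
  simp_rw [mgf, Real.exp_mul_of_eq_zero_or_eq_one (h01 _)]
  rw [integral_add (integrable_const 1) ((integrable_of_eq_zero_or_eq_one hW h01).const_mul _),
    integral_const_mul, integral_of_eq_zero_or_eq_one hW h01]
  simp [mul_comm]

end ZeroOneValued

variable {Ω ι : Type*} [MeasurableSpace Ω] {μ : Measure Ω}

lemma iIndepFun.sum_elim_neg_right {X Y : ι → Ω → ℝ} (h : iIndepFun (Sum.elim X Y) μ) :
    iIndepFun (Sum.elim X fun i => -Y i) μ := by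
  have h' := h.comp (Sum.elim (fun _ => id) (fun _ => Neg.neg))
    (by rintro (i | i); exacts [measurable_id, measurable_neg])
  convert h' using 1
  funext j
  cases j <;> rfl

lemma measureReal_sum_sub_sum_le_le_exp_mul_prod_mgf [Fintype ι] {X Y : ι → Ω → ℝ}
    (hX : ∀ i, Measurable (X i)) (hY : ∀ i, Measurable (Y i))
    (hindep : iIndepFun (Sum.elim X Y) μ) {t : ℝ} (ht : t ≤ 0)
    (hX_int : ∀ i, Integrable (fun ω => exp (t * X i ω)) μ)
    (hY_int : ∀ i, Integrable (fun ω => exp (-t * Y i ω)) μ) (ε : ℝ) :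
    μ.real {ω | ∑ i, X i ω - ∑ i, Y i ω ≤ ε}
      ≤ exp (-t * ε) * ∏ i, mgf (X i) μ t * mgf (Y i) μ (-t) := by
  have := hindep.isProbabilityMeasure
  set Z : ι ⊕ ι → Ω → ℝ := Sum.elim X fun i => -Y i
  have hZ : ∀ j, Measurable (Z j) := by rintro (i | i); exacts [hX i, (hY i).neg]
  have hZ_indep : iIndepFun Z μ := hindep.sum_elim_neg_right
  have hZ_int : ∀ j ∈ Finset.univ, Integrable (fun ω => exp (t * Z j ω)) μ := by
    rintro (i | i) -
    · exact hX_int i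
    · simpa [Z] using hY_int i
  have hZ_sum : ∀ ω, (∑ j, Z j) ω = ∑ i, X i ω - ∑ i, Y i ω := fun ω => by
    simp [Z, Fintype.sum_sum_type, sub_eq_add_neg]
  have hZ_mgf : ∏ j, mgf (Z j) μ t = ∏ i, mgf (X i) μ t * mgf (Y i) μ (-t) := by
    simp [Z, Fintype.prod_sum_type, Finset.prod_mul_distrib, mgf_neg]
  have key := measure_le_le_exp_mul_mgf ε ht (hZ_indep.integrable_exp_mul_sum hZ hZ_int)
  simpa only [hZ_sum, hZ_indep.mgf_sum hZ, hZ_mgf] using key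

end ProbabilityTheory

/-- Chernoff-type bound: for mutually independent `X₁,…,Xₙ` i.i.d. Bernoulli(p) and
`Y₁,…,Yₙ` i.i.d. Bernoulli(q) with `q < p`, for every `a > 0`,
`P(Σ Xᵢ − Σ Yᵢ ≤ −a) ≤ exp(−a·log(p(1−q)/(q(1−p))))`. -/
theorem chernoff_diff_bernoulli
    {Ω : Type*} [MeasureSpace Ω] [IsProbabilityMeasure (ℙ : Measure Ω)]
    (n : ℕ) (p q : ℝ) (hq0 : 0 < q) (hqp : q < p) (hp1 : p < 1)
    (X Y : Fin n → Ω → ℝ)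
    (hXm : ∀ i, Measurable (X i)) (hYm : ∀ i, Measurable (Y i))
    (hX01 : ∀ i ω, X i ω = 0 ∨ X i ω = 1) (hY01 : ∀ i ω, Y i ω = 0 ∨ Y i ω = 1)
    (hXp : ∀ i, ℙ {ω | X i ω = 1} = ENNReal.ofReal p)
    (hYq : ∀ i, ℙ {ω | Y i ω = 1} = ENNReal.ofReal q)
    (hindep : iIndepFun (Sum.elim X Y) ℙ) :
    ∀ a : ℝ, 0 < a →
      ℙ {ω | (∑ i, X i ω) - (∑ i, Y i ω) ≤ -a}
        ≤ ENNReal.ofReal (Real.exp (-a * Real.log (p * (1 - q) / (q * (1 - p))))) := by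
  intro a _
  have hp0 : 0 < p := hq0.trans hqp
  have hq1 : q < 1 := hqp.trans hp1
  set s := log (p * (1 - q) / (q * (1 - p)))
  have hs : 0 ≤ s := log_nonneg <| by
    rw [one_le_div (mul_pos hq0 (by linarith))]
    nlinarith
  have hmgf : ∀ i, mgf (X i) ℙ (-s) * mgf (Y i) ℙ (-(-s)) = 1 := fun i => by
    rw [mgf_of_eq_zero_or_eq_one (hXm i) (hX01 i), mgf_of_eq_zero_or_eq_one (hYm i) (hY01 i),
      measureReal_def, measureReal_def, hXp, hYq, ENNReal.toReal_ofReal hp0.le,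
      ENNReal.toReal_ofReal hq0.le, neg_neg]
    exact mgf_product_at_log_odds_ratio_eq_one hp0 hp1 hq0 hq1
  have key := measureReal_sum_sub_sum_le_le_exp_mul_prod_mgf hXm hYm hindep (neg_nonpos.2 hs)
    (fun i => integrable_exp_mul_of_eq_zero_or_eq_one (hXm i) (hX01 i) _)
    (fun i => integrable_exp_mul_of_eq_zero_or_eq_one (hYm i) (hY01 i) _) (-a)
  rw [Finset.prod_eq_one fun i _ => hmgf i, mul_one, neg_mul_neg, neg_mul, mul_comm] at key
  rwa [ENNReal.le_ofReal_iff_toReal_le (measure_ne_top _ _) (exp_pos _).le, neg_mul]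
end

section
/- Let n and m be natural numbers with 1 ≤ m < n, let 0 < q < p and c > 0 be reals, and let M be the real n×n matrix with M_{ij} = c·p when i and j both lie in {1,…,m} or both lie in {m+1,…,n}, and M_{ij} = c·q otherwise. Set α = m/n and Δ = p² − 4α(1−α)(p² − q²). Then Δ ≥ q² > 0, the rank of M is at most 2, and the two numbers λ± = (c·n/2)·(p ± √Δ) are eigenvalues of M. -/
/-!
`M` is constant on the blocks `{i < m}` and `{i ≥ m}`, so it maps block-constant vectors to
block-constant vectors and factors through the two-dimensional space of such vectors: its
rank is at most 2, and eigenvectors of the `2 × 2` quotient matrix lift to eigenvectors of `M`.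
The quotient has characteristic polynomial `μ² - c p n μ + c² (p² - q²) m (n - m)`, whose
discriminant is `(c n)² Δ`, so its roots are `λ±`. Finally
`Δ - q² = (p² - q²)(1 - 2α)² ≥ 0`.
-/

open Finset Matrix

section BlockConstant

variable {ι β R : Type*} [DecidableEq β]

def blockConstMatrix (f : ι → β) (a b : R) : Matrix ι ι R :=
  Matrix.of fun i j => if f i = f j then a else b

theorem blockConstMatrix_eq_mul [Fintype β] [CommRing R] (f : ι → β) (a b : R) :
    blockConstMatrix f a b =
      (Matrix.of fun i t => if f i = t then a else b) *
        Matrix.of fun t j => if f j = t then (1 : R) else 0 := by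
  ext i j
  simp [blockConstMatrix, Matrix.mul_apply]

theorem rank_blockConstMatrix_le [Fintype ι] [Fintype β] [CommRing R] [StrongRankCondition R]
    (f : ι → β) (a b : R) : (blockConstMatrix f a b).rank ≤ Fintype.card β := by
  rw [blockConstMatrix_eq_mul]
  exact (rank_mul_le_left _ _).trans (rank_le_card_width _)

variable [Fintype ι]

theorem sum_comp_bool [AddCommMonoid R] (f : ι → Bool) (g : Bool → R) :
    ∑ i, g (f i) = #{i | f i = true} • g true + #{i | f i = false} • g false := by
  rw [← Finset.sum_fiberwise Finset.univ f, Fintype.sum_bool]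
  simp only [← Finset.sum_const]
  congr 1 <;> exact Finset.sum_congr rfl fun i hi => by rw [(Finset.mem_filter.1 hi).2]

/-- `(b l, μ - a k)` is an eigenvector, for the eigenvalue `μ`, of the quotient matrix
`!![a k, b l; b k, a l]` (`k`, `l` the block sizes); spread constantly over the blocks it is
one of the full matrix. -/
theorem blockConstMatrix_mulVec_eq_smul [CommRing R] (f : ι → Bool) (a b μ : R)
    (hμ : μ ^ 2 - a * (#{i | f i = true} + #{i | f i = false}) * μ +
      (a ^ 2 - b ^ 2) * #{i | f i = true} * #{i | f i = false} = 0) :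
    blockConstMatrix f a b *ᵥ
        (fun i => if f i then b * #{i | f i = false} else μ - a * #{i | f i = true}) =
      μ • fun i => if f i then b * #{i | f i = false} else μ - a * #{i | f i = true} := by
  funext i
  set k : R := (#{i | f i = true} : R)
  set l : R := (#{i | f i = false} : R)
  have hsum := sum_comp_bool f fun t =>
    (if f i = t then a else b) * (if t then b * l else μ - a * k)
  simp only [mulVec, dotProduct, blockConstMatrix, of_apply, Pi.smul_apply, smul_eq_mul]
  rw [hsum]
  cases f i <;>
    simp only [Bool.false_eq_true, Bool.true_eq_false, if_true, if_false, nsmul_eq_mul]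
  · linear_combination -hμ
  · ring

theorem exists_blockConstMatrix_mulVec_eq_smul [Field R] (f : ι → Bool) (a b μ : R)
    (hb : b ≠ 0) (hl : (#{i | f i = false} : R) ≠ 0) {i₀ : ι} (hi₀ : f i₀ = true)
    (hμ : μ ^ 2 - a * (#{i | f i = true} + #{i | f i = false}) * μ +
      (a ^ 2 - b ^ 2) * #{i | f i = true} * #{i | f i = false} = 0) :
    ∃ x : ι → R, x ≠ 0 ∧ blockConstMatrix f a b *ᵥ x = μ • x := by
  refine ⟨_, fun h => ?_, blockConstMatrix_mulVec_eq_smul f a b μ hμ⟩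
  have := congrFun h i₀
  simp only [hi₀, if_true, Pi.zero_apply] at this
  exact mul_ne_zero hb hl this

end BlockConstant

theorem Fin.card_filter_le_val (n m : ℕ) : #{i : Fin n | m ≤ i.val} = n - m := by
  have := card_filter_add_card_filter_not (s := univ) fun i : Fin n => i.val < m
  simp only [card_univ, Fintype.card_fin, not_lt, Fin.card_filter_val_lt] at this
  omega

theorem sq_le_sq_sub_four_mul_mul_one_sub_mul {p q : ℝ} (hq : 0 ≤ q) (hqp : q ≤ p) (α : ℝ) :
    q ^ 2 ≤ p ^ 2 - 4 * α * (1 - α) * (p ^ 2 - q ^ 2) := by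
  have := mul_nonneg (sub_nonneg.2 (pow_le_pow_left₀ hq hqp 2)) (sq_nonneg (1 - 2 * α))
  linear_combination this

theorem two_block_charpoly_root {m n : ℝ} (hn : n ≠ 0) (p q c : ℝ) {s : ℝ}
    (hs : s ^ 2 = p ^ 2 - 4 * (m / n) * (1 - m / n) * (p ^ 2 - q ^ 2)) :
    ((c * n / 2) * (p + s)) ^ 2 - c * p * (m + (n - m)) * ((c * n / 2) * (p + s)) +
      ((c * p) ^ 2 - (c * q) ^ 2) * m * (n - m) = 0 := by
  field_simp at hs
  linear_combination (c ^ 2 / 4) * hs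

/-- For the two-block matrix with diagonal-block entries `c·p` and off-diagonal-block
entries `c·q`, the discriminant `Δ = p² − 4α(1−α)(p² − q²)` satisfies `Δ ≥ q² > 0`, the
rank of the matrix is at most 2, and `(c·n/2)·(p ± √Δ)` are eigenvalues. -/
theorem block_matrix_eigenvalues (n m : ℕ) (hm : 1 ≤ m) (hmn : m < n)
    (p q c : ℝ) (hq : 0 < q) (hqp : q < p) (hc : 0 < c)
    (M : Matrix (Fin n) (Fin n) ℝ)
    (hM : ∀ i j : Fin n, M i j =
      if (i.val < m ∧ j.val < m) ∨ (m ≤ i.val ∧ m ≤ j.val) then c * p else c * q)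
    (α : ℝ) (hα : α = (m : ℝ) / n)
    (Δ : ℝ) (hΔ : Δ = p ^ 2 - 4 * α * (1 - α) * (p ^ 2 - q ^ 2)) :
    Δ ≥ q ^ 2 ∧ q ^ 2 > 0 ∧ M.rank ≤ 2 ∧
    (∃ x : Fin n → ℝ, x ≠ 0 ∧
      M.mulVec x = ((c * n / 2) * (p + Real.sqrt Δ)) • x) ∧
    (∃ x : Fin n → ℝ, x ≠ 0 ∧
      M.mulVec x = ((c * n / 2) * (p - Real.sqrt Δ)) • x) := by
  set f : Fin n → Bool := fun i => decide (i.val < m)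
  have hM_eq : M = blockConstMatrix f (c * p) (c * q) := by
    ext i j
    simp only [hM, blockConstMatrix, of_apply, f, decide_eq_decide]
    congr 1
    exact propext (by omega)
  have hk : #{i | f i = true} = m := by simp [f, Fin.card_filter_val_lt, hmn.le]
  have hl : #{i | f i = false} = n - m := by simp [f, Fin.card_filter_le_val]
  have hΔ_ge : Δ ≥ q ^ 2 := hΔ ▸ sq_le_sq_sub_four_mul_mul_one_sub_mul hq.le hqp.le α
  have hΔ_nonneg : 0 ≤ Δ := (sq_nonneg q).trans hΔ_ge
  have h_eigen : ∀ s : ℝ, s ^ 2 = Δ →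
      ∃ x : Fin n → ℝ, x ≠ 0 ∧ M *ᵥ x = ((c * n / 2) * (p + s)) • x := by
    intro s hs
    rw [hM_eq]
    refine exists_blockConstMatrix_mulVec_eq_smul f _ _ _ (by positivity)
      (by rw [hl]; exact Nat.cast_ne_zero.2 (by omega)) (i₀ := ⟨0, by omega⟩)
      (decide_eq_true hm) ?_
    rw [hk, hl, Nat.cast_sub hmn.le]
    exact two_block_charpoly_root (Nat.cast_ne_zero.2 (by omega)) p q c (hα ▸ hΔ ▸ hs)
  refine ⟨hΔ_ge, by positivity, ?_, h_eigen _ (Real.sq_sqrt hΔ_nonneg), ?_⟩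
  · simpa [hM_eq] using rank_blockConstMatrix_le f (c * p) (c * q)
  · simpa [sub_eq_add_neg] using h_eigen _ (by rw [neg_sq, Real.sq_sqrt hΔ_nonneg])
end
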